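/- arXiv:1811.00184 — 4 statements merged into one kernel-verified Lean document; each statement's English description precedes it below -/
import Mathlib

section
/- Let α be irrational with continued fraction denominators (q_n). If φ: 𝕋 → ℝ has bounded variation Var(φ), then for every s ∈ ℕ and every z ∈ 𝕋, the Birkhoff sum along the rotation by α satisfies |φ^{(q_s)}(z) − q_s ∫_𝕋 φ dλ| ≤ Var(φ), where φ^{(n)}(z) = Σ_{i=0}^{n−1} φ(z + iα). -/
/-!
Write `α = p / q + c` with `p / q` the `s`-th convergent, so that `q * |c| ≤ 1 / q`. Modulo `1`,
the orbit point `z + i * α` (`i < q`) is `z + i * c + (i * p mod q) / q`, and all the shifts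
`i * c` lie in one interval `[w, w + 1 / q]`. Since `p` is coprime to `q` (the determinant
`p_s q_{s+1} - q_s p_{s+1} = ±1`), `i ↦ i * p mod q` permutes `{0, …, q - 1}`, so the `q` orbit
points fall one into each cell of the grid `z + w + j / q` of mesh `1 / q`. On a cell `C`,
`|φ y - q ∫_C φ| ≤ Var(φ, C)`, and the variations of the cells of one period add up to `Var φ`.
-/

open MeasureTheory

/-- Birkhoff sum `φ^{(n)}(x) = ∑_{i=0}^{n-1} φ(x + iα)` along the rotation by `α`. -/
noncomputable def birkhoff (α : ℝ) (φ : ℝ → ℝ) (n : ℕ) (x : ℝ) : ℝ :=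
  ∑ i ∈ Finset.range n, φ (x + i * α)

/-- `q` is the sequence of denominators of the continued fraction expansion of `α`. -/
def IsCFDenoms (α : ℝ) (q : ℕ → ℕ) : Prop :=
  ∀ n, (q n : ℝ) = (GenContFract.of α).dens n

open Set

theorem BoundedVariationOn.intervalIntegrable {f : ℝ → ℝ} {a b : ℝ}
    (hf : BoundedVariationOn f (uIcc a b)) : IntervalIntegrable f volume a b := by
  obtain ⟨p, q, hp, hq, rfl⟩ := hf.locallyBoundedVariationOn.exists_monotoneOn_sub_monotoneOn
  exact hp.intervalIntegrable.sub hq.intervalIntegrable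

theorem BoundedVariationOn.abs_mul_sub_integral_le {f : ℝ → ℝ} {a b x : ℝ} (hab : a ≤ b)
    (hf : BoundedVariationOn f (Icc a b)) (hx : x ∈ Icc a b) :
    |(b - a) * f x - ∫ t in a..b, f t| ≤ (b - a) * (eVariationOn f (Icc a b)).toReal := by
  have hint : IntervalIntegrable f volume a b :=
    BoundedVariationOn.intervalIntegrable (by rwa [uIcc_of_le hab])
  have hdiff : (b - a) * f x - ∫ t in a..b, f t = ∫ t in a..b, (f x - f t) := by
    rw [intervalIntegral.integral_sub intervalIntegrable_const hint,
      intervalIntegral.integral_const, smul_eq_mul]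
  have hbound : ∀ t ∈ uIoc a b, ‖f x - f t‖ ≤ (eVariationOn f (Icc a b)).toReal := by
    intro t ht
    rw [uIoc_of_le hab] at ht
    exact hf.dist_le hx (Ioc_subset_Icc_self ht)
  rw [hdiff, ← Real.norm_eq_abs]
  refine (intervalIntegral.norm_integral_le_of_norm_le_const hbound).trans_eq ?_
  rw [abs_of_nonneg (sub_nonneg.mpr hab), mul_comm]

theorem abs_sum_sub_integral_le_of_bijOn {ι : Type*} {f : ℝ → ℝ} {a h : ℝ} {n : ℕ}
    {s : Finset ι} {k : ι → ℕ} {y : ι → ℝ} (hh : 0 ≤ h)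
    (hf : BoundedVariationOn f (Icc a (a + n * h))) (hk : BijOn k s (Finset.range n))
    (hy : ∀ i ∈ s, y i ∈ Icc (a + k i * h) (a + (k i + 1) * h)) :
    |h * ∑ i ∈ s, f (y i) - ∫ x in a..a + n * h, f x| ≤
      h * (eVariationOn f (Icc a (a + n * h))).toReal := by
  let c : ℕ → ℝ := fun j => a + j * h
  have hc_mono : Monotone c := fun i j hij => by simp only [c]; gcongr
  have hc_succ (j : ℕ) : c (j + 1) = a + (j + 1) * h := by simp [c]
  have hc_ends : Icc a (a + n * h) = Icc (c 0) (c n) := by simp [c]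
  have hcell : ∀ j < n, BoundedVariationOn f (Icc (c j) (c (j + 1))) := fun j hj =>
    hf.mono <| hc_ends ▸ Icc_subset_Icc (hc_mono j.zero_le) (hc_mono hj)
  have hreindex (g : ℕ → ℝ) : ∑ i ∈ s, g (k i) = ∑ j ∈ Finset.range n, g j :=
    Finset.sum_nbij k hk.mapsTo hk.injOn hk.surjOn fun _ _ => rfl
  have hintegral : ∫ x in a..a + n * h, f x = ∑ i ∈ s, ∫ x in c (k i)..c (k i + 1), f x := by
    rw [hreindex fun j => ∫ x in c j..c (j + 1), f x,
      intervalIntegral.sum_integral_adjacent_intervals fun j hj =>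
        BoundedVariationOn.intervalIntegrable <| (uIcc_of_le (hc_mono j.le_succ)).symm ▸ hcell j hj]
    simp [c]
  have hvariation : (eVariationOn f (Icc a (a + n * h))).toReal =
      ∑ i ∈ s, (eVariationOn f (Icc (c (k i)) (c (k i + 1)))).toReal := by
    rw [hreindex fun j => (eVariationOn f (Icc (c j) (c (j + 1)))).toReal,
      ← ENNReal.toReal_sum fun j hj => hcell j (Finset.mem_range.mp hj),
      eVariationOn.sum' f hc_mono, hc_ends]
  have hterm (i : ι) (hi : i ∈ s) : |h * f (y i) - ∫ x in c (k i)..c (k i + 1), f x| ≤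
      h * (eVariationOn f (Icc (c (k i)) (c (k i + 1)))).toReal := by
    have hlen : c (k i + 1) - c (k i) = h := by rw [hc_succ]; ring
    have := (hcell (k i) (Finset.mem_range.mp (hk.mapsTo hi))).abs_mul_sub_integral_le
      (hc_mono (k i).le_succ) (hc_succ (k i) ▸ hy i hi)
    rwa [hlen] at this
  rw [hintegral, hvariation, Finset.mul_sum, Finset.mul_sum, ← Finset.sum_sub_distrib]
  exact (Finset.abs_sum_le_sum_abs _ _).trans (Finset.sum_le_sum hterm)

theorem Function.Periodic.eVariationOn_Icc_add_const {f : ℝ → ℝ} {c : ℝ}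
    (hf : Function.Periodic f c) (a b : ℝ) :
    eVariationOn f (Icc (a + c) (b + c)) = eVariationOn f (Icc a b) := by
  have hmono : MonotoneOn (· + c) (Icc a b) := fun x _ y _ hxy => by simpa using hxy
  rw [← image_add_const_Icc, ← eVariationOn.comp_eq_of_monotoneOn f _ hmono]
  exact congrArg (eVariationOn · _) (funext hf)

theorem Function.Periodic.eVariationOn_Icc_add_eq {f : ℝ → ℝ} {T : ℝ}
    (hf : Function.Periodic f T) (t s : ℝ) :
    eVariationOn f (Icc t (t + T)) = eVariationOn f (Icc s (s + T)) := by
  rcases le_or_gt T 0 with hT | hT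
  · rw [eVariationOn.subsingleton f, eVariationOn.subsingleton f] <;>
      exact (subsingleton_Icc_of_ge (by linarith))
  suffices h : ∀ t, eVariationOn f (Icc t (t + T)) = eVariationOn f (Icc 0 T) by rw [h, h]
  intro t
  obtain ⟨hr0, hrT⟩ := Int.fract_div_mul_self_mem_Ico T t hT
  have ht := Int.fract_div_mul_self_add_zsmul_eq T t hT.ne'
  set r := Int.fract (t / T) * T
  have hsplit₁ :=
    eVariationOn.Icc_add_Icc f (s := univ) hrT.le (by linarith : T ≤ r + T) (mem_univ T)
  have hsplit₂ := eVariationOn.Icc_add_Icc f (s := univ) hr0 hrT.le (mem_univ r)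
  simp only [univ_inter] at hsplit₁ hsplit₂
  have hshift : eVariationOn f (Icc T (r + T)) = eVariationOn f (Icc 0 r) := by
    simpa using hf.eVariationOn_Icc_add_const 0 r
  rw [← ht, add_right_comm, (hf.zsmul ⌊t / T⌋).eVariationOn_Icc_add_const, ← hsplit₁, hshift,
    ← hsplit₂, add_comm]

theorem Function.Periodic.abs_sum_sub_mul_integral_le_of_bijOn {ι : Type*} {f : ℝ → ℝ}
    (hf : Function.Periodic f 1) (hbv : BoundedVariationOn f (Icc 0 1)) {n : ℕ} (hn : n ≠ 0)
    {s : Finset ι} {k : ι → ℕ} {y : ι → ℝ} (a : ℝ) (hk : BijOn k s (Finset.range n))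
    (hy : ∀ i ∈ s, y i ∈ Icc (a + k i / n) (a + (k i + 1) / n)) :
    |∑ i ∈ s, f (y i) - n * ∫ x in (0:ℝ)..1, f x| ≤ (eVariationOn f (Icc 0 1)).toReal := by
  have hn' : (0 : ℝ) < n := by positivity
  have hperiod : a + n * (1 / n) = a + 1 := by rw [mul_one_div_cancel hn'.ne']
  have hbv' : BoundedVariationOn f (Icc a (a + n * (1 / n))) := by
    rwa [hperiod, BoundedVariationOn, hf.eVariationOn_Icc_add_eq _ 0, zero_add]
  have hbound := abs_sum_sub_integral_le_of_bijOn (by positivity) hbv' hk fun i hi => by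
    simpa only [add_mul, one_mul, mul_one_div] using hy i hi
  rw [hperiod, hf.intervalIntegral_add_eq _ 0, hf.eVariationOn_Icc_add_eq _ 0,
    zero_add] at hbound
  calc _ = |(n : ℝ) * (1 / n * ∑ i ∈ s, f (y i) - ∫ x in (0:ℝ)..1, f x)| := by
        rw [mul_sub, ← mul_assoc, mul_one_div_cancel hn'.ne', one_mul]
    _ ≤ n * (1 / n * (eVariationOn f (Icc 0 1)).toReal) := by
      rw [abs_mul, abs_of_pos hn']; gcongr
    _ = _ := by field_simp

namespace GenContFract

variable {K : Type*} [Field K] [LinearOrder K] [FloorRing K]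

theorem exists_int_contsAux_a (v : K) (n : ℕ) :
    ∃ p : ℤ, ((GenContFract.of v).contsAux n).a = p := by
  induction n using Nat.twoStepInduction with
  | zero => exact ⟨1, by simp [contsAux]⟩
  | one => exact ⟨⌊v⌋, by simp [contsAux, of_h_eq_floor]⟩
  | more n ih₀ ih₁ =>
    obtain ⟨p₀, hp₀⟩ := ih₀
    obtain ⟨p₁, hp₁⟩ := ih₁
    cases hs : (GenContFract.of v).s.get? n with
    | none => exact ⟨p₁, by simp [contsAux, hs, hp₁]⟩
    | some gp =>
      obtain ⟨ha, b, hb⟩ := of_partNum_eq_one_and_exists_int_partDen_eq hs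
      exact ⟨b * p₁ + p₀, by simp [contsAux, hs, nextConts, nextNum, ha, hb, hp₀, hp₁]⟩

theorem exists_int_nums (v : K) (n : ℕ) : ∃ p : ℤ, (GenContFract.of v).nums n = p :=
  exists_int_contsAux_a v (n + 1)

theorem one_le_dens [IsStrictOrderedRing K] (v : K) (n : ℕ) : 1 ≤ (GenContFract.of v).dens n := by
  induction n with
  | zero => rw [zeroth_den_eq_one]
  | succ n ih => exact ih.trans of_den_mono

end GenContFract

theorem Irrational.not_terminatedAt_genContFract {α : ℝ} (hα : Irrational α) (n : ℕ) :
    ¬(GenContFract.of α).TerminatedAt n := fun h => by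
  obtain ⟨r, hr⟩ := (GenContFract.terminates_iff_rat α).mp ⟨n, h⟩
  exact hα ⟨r, hr.symm⟩

namespace IsCFDenoms

variable {α : ℝ} {q : ℕ → ℕ}

theorem one_le (hq : IsCFDenoms α q) (n : ℕ) : 1 ≤ q n := by
  have := GenContFract.one_le_dens α n
  rwa [← hq, Nat.one_le_cast] at this

theorem le_succ (hq : IsCFDenoms α q) (n : ℕ) : q n ≤ q (n + 1) := by
  have := (GenContFract.of_den_mono : (GenContFract.of α).dens n ≤ _)
  rwa [← hq, ← hq, Nat.cast_le] at this

theorem exists_isCoprime_abs_sub_le (hq : IsCFDenoms α q) (hα : Irrational α) (n : ℕ) :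
    ∃ p : ℤ, IsCoprime p (q n) ∧ |α - p / q n| ≤ 1 / (q n * q (n + 1)) := by
  obtain ⟨p, hp⟩ := GenContFract.exists_int_nums α n
  obtain ⟨p', hp'⟩ := GenContFract.exists_int_nums α (n + 1)
  have hdet := SimpContFract.determinant (s := SimpContFract.of α)
    (hα.not_terminatedAt_genContFract n)
  have happrox := GenContFract.abs_sub_convs_le (hα.not_terminatedAt_genContFract n)
  simp only [SimpContFract.of, GenContFract.conv_eq_num_div_den] at hdet happrox
  rw [hp, hp', ← hq, ← hq] at hdet
  rw [hp, ← hq, ← hq] at happrox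
  refine ⟨p, ?_, happrox⟩
  have hdetℤ : p * q (n + 1) - q n * p' = (-1) ^ (n + 1) := by exact_mod_cast hdet
  refine ⟨(-1) ^ (n + 1) * q (n + 1), -(-1) ^ (n + 1) * p', ?_⟩
  have hsq : ((-1 : ℤ) ^ (n + 1)) ^ 2 = 1 := by rw [← pow_mul, pow_mul', neg_one_sq, one_pow]
  linear_combination (-1) ^ (n + 1) * hdetℤ + hsq

end IsCFDenoms

theorem ZMod.bijOn_val_natCast_mul {n : ℕ} [NeZero n] {u : ZMod n} (hu : IsUnit u) :
    BijOn (fun i : ℕ => ((i : ZMod n) * u).val) (Finset.range n) (Finset.range n) := by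
  have hmaps : MapsTo (fun i : ℕ => ((i : ZMod n) * u).val) (Finset.range n) (Finset.range n) :=
    fun i _ => Finset.mem_range.mpr (ZMod.val_lt _)
  refine ((Finset.range n).finite_toSet.injOn_iff_bijOn_of_mapsTo hmaps).mp ?_
  intro i hi j hj hij
  have hcast := hu.mul_left_inj.mp (ZMod.val_injective n hij)
  rwa [ZMod.natCast_eq_natCast_iff', Nat.mod_eq_of_lt (Finset.mem_range.mp hi),
    Nat.mod_eq_of_lt (Finset.mem_range.mp hj)] at hcast

theorem Function.Periodic.apply_add_intCast_div_eq {f : ℝ → ℝ} (hf : Function.Periodic f 1)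
    {n : ℕ} {a b : ℤ} (hab : (a : ZMod n) = b) (x : ℝ) : f (x + a / n) = f (x + b / n) := by
  obtain ⟨m, hm⟩ := (ZMod.intCast_eq_intCast_iff_dvd_sub a b n).mp hab
  rcases eq_or_ne n 0 with rfl | hn
  · simp
  have hm' : (b : ℝ) - a = n * m := by exact_mod_cast hm
  have ha : (a : ℝ) / n = b / n - m * 1 := by
    field_simp
    linarith
  rw [ha, ← add_sub_assoc, hf.sub_int_mul_eq]

theorem exists_forall_natCast_mul_mem_Icc {c δ : ℝ} {n : ℕ} (h : n * |c| ≤ δ) :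
    ∃ w, ∀ i ≤ n, (i : ℝ) * c ∈ Icc w (w + δ) := by
  rcases le_total 0 c with hc | hc
  · refine ⟨0, fun i hi => ⟨by positivity, ?_⟩⟩
    rw [abs_of_nonneg hc] at h
    have : (i : ℝ) ≤ n := by exact_mod_cast hi
    nlinarith
  · refine ⟨-δ, fun i hi => ⟨?_, by nlinarith⟩⟩
    rw [abs_of_nonpos hc] at h
    have : (i : ℝ) ≤ n := by exact_mod_cast hi
    nlinarith

/-- Denjoy–Koksma inequality: for a 1-periodic function `φ` of bounded variation and any
denominator `q_s` of the continued fraction of the irrational `α`, the Birkhoff sum at time `q_s`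
deviates from `q_s ∫ φ` by at most the total variation of `φ`. -/
theorem denjoy_koksma (α : ℝ) (hα : Irrational α) (q : ℕ → ℕ) (hq : IsCFDenoms α q)
    (φ : ℝ → ℝ) (hper : Function.Periodic φ 1)
    (hbv : BoundedVariationOn φ (Set.Icc 0 1)) (s : ℕ) (z : ℝ) :
    |birkhoff α φ (q s) z - (q s : ℝ) * ∫ x in (0:ℝ)..1, φ x| ≤
      (eVariationOn φ (Set.Icc 0 1)).toReal := by
  obtain ⟨p, hcop, happrox⟩ := hq.exists_isCoprime_abs_sub_le hα s
  have hQ : (0 : ℝ) < q s := by exact_mod_cast hq.one_le s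
  have hQc : q s * |α - p / q s| ≤ 1 / q s := by
    have hQQ' : (q s : ℝ) ≤ q (s + 1) := by exact_mod_cast hq.le_succ s
    calc _ ≤ (q s : ℝ) * (1 / (q s * q s)) := by gcongr; exact happrox.trans (by gcongr)
      _ = 1 / q s := by field_simp
  obtain ⟨w, hw⟩ := exists_forall_natCast_mul_mem_Icc hQc
  generalize q s = Q at hcop hQ hw ⊢
  have : NeZero Q := ⟨by exact_mod_cast hQ.ne'⟩
  let k : ℕ → ℕ := fun i => ((i : ZMod Q) * p).val
  have hsum : birkhoff α φ Q z =
      ∑ i ∈ Finset.range Q, φ (z + i * (α - p / Q) + k i / Q) := by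
    refine Finset.sum_congr rfl fun i _ => ?_
    have hrot : z + i * α = z + i * (α - p / Q) + ((i * p : ℤ) : ℝ) / Q := by push_cast; ring
    have hk : ((i * p : ℤ) : ZMod Q) = ((k i : ℤ) : ZMod Q) := by simp [k]
    rw [hrot, hper.apply_add_intCast_div_eq hk, Int.cast_natCast]
  rw [hsum]
  refine hper.abs_sum_sub_mul_integral_le_of_bijOn hbv (NeZero.ne Q) (z + w)
    (ZMod.bijOn_val_natCast_mul ((ZMod.coe_int_isUnit_iff_isCoprime p Q).mpr hcop.symm))
    fun i hi => ?_
  obtain ⟨h₁, h₂⟩ := hw i (Finset.mem_range.mp hi).le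
  rw [Set.mem_Icc, add_div, ← add_assoc]
  constructor <;> linarith
end

section
/- Let α be irrational and φ: 𝕋 → ℝ of bounded variation. For every ε > 0 there exists n_ε ∈ ℕ such that for every integer n with |n| ≥ n_ε and every x ∈ 𝕋, |φ^{(n)}(x) − n ∫_𝕋 φ dλ| < ε|n|, where φ^{(n)} denotes the Birkhoff sum of φ under the rotation R_α (with φ^{(−n)}(x) = −φ^{(n)}(x − nα) for n ≥ 1). -/
/-
Continuous `1`-periodic functions have uniformly convergent Birkhoff averages: in `C(𝕋, ℂ)` these
functions form a closed submodule, and it contains every character `e_k`, whose Birkhoff sums are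
geometric sums bounded independently of `n` because `e_k(α) ≠ 1`.

A BV function is a difference of two monotone ones, and a periodized monotone function
`T = m ∘ fract` is squeezed between continuous periodic functions with almost the same mean: the
average of `T + (m 1 - m 0) χ` over `[x, x + δ]` lies above `T x`, and the average of
`T - (m 1 - m 0) χ` over `[x - δ, x]` lies below it, where `χ` is the indicator of the closed
`δ`-neighbourhood of `ℤ`. Squeezing Birkhoff averages between those of the two bounds gives uniform
convergence for BV functions. Negative times reduce to positive ones through
`φ^{(−n)}(x) = −φ^{(n)}(x − nα)`.
-/

open MeasureTheory

/-- Birkhoff sums indexed by `ℤ`: `φ^{(−n)}(x) = −φ^{(n)}(x − nα)` for `n ≥ 1`. -/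
noncomputable def birkhoffZ (α : ℝ) (φ : ℝ → ℝ) (n : ℤ) (x : ℝ) : ℝ :=
  if 0 ≤ n then birkhoff α φ n.toNat x
  else -birkhoff α φ (-n).toNat (x - ((-n).toNat : ℝ) * α)

open Filter Function Set

section Birkhoff

variable {X E : Type*} [NormedAddCommGroup E] [NormedSpace ℝ E] {f : X → X}

theorem dist_birkhoffAverage_le {g g' : X → E} {C : ℝ} (h : ∀ x, dist (g x) (g' x) ≤ C)
    (n : ℕ) (x : X) : dist (birkhoffAverage ℝ f g n x) (birkhoffAverage ℝ f g' n x) ≤ C := by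
  rcases n.eq_zero_or_pos with rfl | hn
  · simpa using dist_nonneg.trans (h x)
  rw [birkhoffAverage, birkhoffAverage, dist_smul₀, norm_inv, Real.norm_natCast,
    inv_mul_le_iff₀ (by positivity)]
  calc dist (birkhoffSum f g n x) (birkhoffSum f g' n x)
      ≤ ∑ k ∈ Finset.range n, dist (g (f^[k] x)) (g' (f^[k] x)) := dist_sum_sum_le _ _ _
    _ ≤ ∑ _k ∈ Finset.range n, C := Finset.sum_le_sum fun k _ => h (f^[k] x)
    _ = n * C := by simp

theorem birkhoffAverage_mono {g g' : X → ℝ} (h : g ≤ g') (n : ℕ) (x : X) :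
    birkhoffAverage ℝ f g n x ≤ birkhoffAverage ℝ f g' n x :=
  smul_le_smul_of_nonneg_left (Finset.sum_le_sum fun k _ => h _) (by positivity)

theorem tendstoUniformly_birkhoffAverage_of_forall_sandwich {φ : X → ℝ} {c : ℝ}
    (h : ∀ ε > 0, ∃ (L U : X → ℝ) (l u : ℝ), L ≤ φ ∧ φ ≤ U ∧ c - ε ≤ l ∧ u ≤ c + ε ∧
      TendstoUniformly (birkhoffAverage ℝ f L) (fun _ => l) atTop ∧
      TendstoUniformly (birkhoffAverage ℝ f U) (fun _ => u) atTop) :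
    TendstoUniformly (birkhoffAverage ℝ f φ) (fun _ => c) atTop := by
  refine Metric.tendstoUniformly_iff.2 fun ε hε => ?_
  obtain ⟨L, U, l, u, hL, hU, hl, hu, hLt, hUt⟩ := h (ε / 2) (half_pos hε)
  filter_upwards [Metric.tendstoUniformly_iff.1 hLt _ (half_pos hε),
    Metric.tendstoUniformly_iff.1 hUt _ (half_pos hε)] with n hLn hUn x
  have hLx := abs_lt.1 (hLn x)
  have hUx := abs_lt.1 (hUn x)
  rw [Real.dist_eq, abs_lt]
  constructor <;>
    linarith [birkhoffAverage_mono (f := f) hL n x, birkhoffAverage_mono (f := f) hU n x]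

end Birkhoff

section Rotation

variable {α : ℝ}

theorem birkhoffSum_add_right {M : Type*} [AddCommMonoid M] (g : ℝ → M) (n : ℕ) (x : ℝ) :
    birkhoffSum (· + α) g n x = ∑ i ∈ Finset.range n, g (x + i * α) := by
  simp [birkhoffSum, nsmul_eq_mul]

theorem fourier_add_nsmul {T : ℝ} (k : ℤ) (z a : AddCircle T) (i : ℕ) :
    fourier k (z + i • a) = fourier k z * fourier k a ^ i := by
  simp [fourier_apply, smul_add, smul_comm k i, AddCircle.toCircle_add, AddCircle.toCircle_nsmul]

theorem fourier_coe_ne_one (hα : Irrational α) {k : ℤ} (hk : k ≠ 0) :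
    fourier k (α : UnitAddCircle) ≠ 1 := by
  rw [fourier_apply, ← Circle.coe_one, Ne, Circle.coe_inj, ← AddCircle.toCircle_zero,
    (AddCircle.injective_toCircle one_ne_zero).eq_iff, ← QuotientAddGroup.mk_zsmul,
    AddCircle.coe_eq_zero_iff]
  rintro ⟨m, hm⟩
  exact (hα.intCast_mul hk).ne_int m (by simpa [eq_comm] using hm)

theorem norm_geom_sum_le {w : ℂ} (hw : ‖w‖ = 1) (hw1 : w ≠ 1) (n : ℕ) :
    ‖∑ i ∈ Finset.range n, w ^ i‖ ≤ 2 / ‖w - 1‖ := by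
  rw [geom_sum_eq hw1, norm_div]
  gcongr
  calc ‖w ^ n - 1‖ ≤ ‖w ^ n‖ + ‖(1:ℂ)‖ := norm_sub_le _ _
    _ = 2 := by rw [norm_pow, hw]; norm_num

theorem intervalIntegral_fourier_eq_zero (hα : Irrational α) {k : ℤ} (hk : k ≠ 0) :
    ∫ y in (0:ℝ)..1, fourier k (y : UnitAddCircle) = 0 := by
  set e : ℝ → ℂ := fun y => fourier k (y : UnitAddCircle)
  have hper : Periodic e 1 := fun y => by simp only [e, AddCircle.coe_add_period]
  -- the mean is invariant under the rotation, which multiplies `e` by `e α ≠ 1`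
  have hinv : (∫ y in (0:ℝ)..1, e y) * e α = ∫ y in (0:ℝ)..1, e y := by
    rw [← intervalIntegral.integral_mul_const]
    calc ∫ y in (0:ℝ)..1, e y * e α = ∫ y in (0:ℝ)..1, e (y + α) := by
          congr 1; ext y
          simp only [e]
          rw [AddCircle.coe_add, ← pow_one (fourier k (α : UnitAddCircle)), ← fourier_add_nsmul,
            one_smul]
      _ = ∫ y in α..α + 1, e y := by
          rw [intervalIntegral.integral_comp_add_right e, zero_add, add_comm]
      _ = ∫ y in (0:ℝ)..1, e y := by simpa using hper.intervalIntegral_add_eq α 0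
  have hmul : (∫ y in (0:ℝ)..1, e y) * (e α - 1) = 0 := by rw [mul_sub, hinv, mul_one, sub_self]
  exact (mul_eq_zero.1 hmul).resolve_right (sub_ne_zero.2 (fourier_coe_ne_one hα hk))

theorem tendstoUniformly_birkhoffAverage_fourier (hα : Irrational α) (k : ℤ) :
    TendstoUniformly (birkhoffAverage ℝ (· + α) fun x : ℝ => fourier k (x : UnitAddCircle))
      (fun _ => ∫ y in (0:ℝ)..1, fourier k (y : UnitAddCircle)) atTop := by
  rcases eq_or_ne k 0 with rfl | hk
  · simp only [fourier_zero, intervalIntegral.integral_const, sub_zero, one_smul]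
    refine Metric.tendstoUniformly_iff.2 fun ε hε =>
      (eventually_ne_atTop 0).mono fun n hn x => ?_
    rwa [birkhoffAverage_of_comp_eq ℝ rfl (Nat.cast_ne_zero.2 hn), dist_self]
  set w := fourier k (α : UnitAddCircle)
  have hnorm (z : UnitAddCircle) : ‖fourier k z‖ = 1 := Circle.norm_coe _
  have hbound : ∀ (n : ℕ) (x : ℝ), ‖birkhoffAverage ℝ (· + α)
      (fun x : ℝ => fourier k (x : UnitAddCircle)) n x‖ ≤ 2 / ‖w - 1‖ / n := by
    intro n x
    have hsum : birkhoffSum (· + α) (fun x : ℝ => fourier k (x : UnitAddCircle)) n x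
        = fourier k (x : UnitAddCircle) * ∑ i ∈ Finset.range n, w ^ i := by
      rw [birkhoffSum_add_right, Finset.mul_sum]
      refine Finset.sum_congr rfl fun i _ => ?_
      rw [AddCircle.coe_add, ← nsmul_eq_mul, AddCircle.coe_nsmul, fourier_add_nsmul]
    rw [birkhoffAverage, hsum, norm_smul, norm_mul, hnorm, one_mul, norm_inv,
      Real.norm_natCast, inv_mul_eq_div]
    gcongr
    exact norm_geom_sum_le (hnorm _) (fourier_coe_ne_one hα hk) n
  rw [intervalIntegral_fourier_eq_zero hα hk]
  refine Metric.tendstoUniformly_iff.2 fun ε hε =>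
    ((tendsto_const_div_atTop_nhds_zero_nat (2 / ‖w - 1‖)).eventually (gt_mem_nhds hε)).mono
      fun n hn x => ?_
  rw [dist_zero_left]
  exact (hbound n x).trans_lt hn

theorem intervalIntegrable_comp_coe {E : Type*} [NormedAddCommGroup E] (f : C(UnitAddCircle, E))
    (a b : ℝ) : IntervalIntegrable (fun y : ℝ => f y) volume a b :=
  (f.continuous.comp (AddCircle.continuous_mk' 1)).intervalIntegrable a b

def uniformBirkhoffSubmodule (α : ℝ) : Submodule ℂ C(UnitAddCircle, ℂ) where
  carrier := {f | TendstoUniformly (birkhoffAverage ℝ (· + α) fun x : ℝ => f x)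
    (fun _ => ∫ y in (0:ℝ)..1, f y) atTop}
  zero_mem' := Metric.tendstoUniformly_iff.2 fun ε hε =>
    Eventually.of_forall fun n x => by simpa [birkhoffAverage, birkhoffSum] using hε
  add_mem' {f g} hf hg := by
    simp only [Set.mem_ofPred_eq, ContinuousMap.add_apply, intervalIntegral.integral_add
      (intervalIntegrable_comp_coe f 0 1) (intervalIntegrable_comp_coe g 0 1)]
    exact birkhoffAverage_add (R := ℝ) (g := fun x : ℝ => f x) (g' := fun x : ℝ => g x) ▸
      hf.add hg
  smul_mem' c f hf := by
    simp only [Set.mem_ofPred_eq, ContinuousMap.smul_apply, intervalIntegral.integral_smul]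
    convert (uniformContinuous_const_smul c).comp_tendstoUniformly hf using 1
    · ext n x
      exact (map_birkhoffAverage ℝ ℝ (DistribSMul.toAddMonoidHom ℂ c) _ _ n x).symm
    · rfl

theorem isClosed_uniformBirkhoffSubmodule (α : ℝ) :
    IsClosed (uniformBirkhoffSubmodule α : Set C(UnitAddCircle, ℂ)) := by
  refine isClosed_of_closure_subset fun f hf => Metric.tendstoUniformly_iff.2 fun ε hε => ?_
  obtain ⟨g, hg, hfg⟩ := Metric.mem_closure_iff.1 hf (ε / 3) (by positivity)
  have hclose (z : UnitAddCircle) : dist (f z) (g z) ≤ ε / 3 :=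
    (ContinuousMap.dist_apply_le_dist z).trans hfg.le
  filter_upwards [Metric.tendstoUniformly_iff.1 hg (ε / 3) (by positivity)] with n hn x
  have hmean : dist (∫ y in (0:ℝ)..1, f y) (∫ y in (0:ℝ)..1, g y) ≤ ε / 3 := by
    rw [dist_eq_norm, ← intervalIntegral.integral_sub (intervalIntegrable_comp_coe f 0 1)
      (intervalIntegrable_comp_coe g 0 1)]
    simpa using intervalIntegral.norm_integral_le_of_norm_le_const (a := 0) (b := 1)
      fun y _ => dist_eq_norm (f y) (g y) ▸ hclose y
  have haverage : dist (birkhoffAverage ℝ (· + α) (fun x : ℝ => g x) n x)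
      (birkhoffAverage ℝ (· + α) (fun x : ℝ => f x) n x) ≤ ε / 3 :=
    dist_birkhoffAverage_le (fun y => dist_comm (f y) (g y) ▸ hclose y) n x
  linarith [dist_triangle4 (∫ y in (0:ℝ)..1, f y) (∫ y in (0:ℝ)..1, g y)
    (birkhoffAverage ℝ (· + α) (fun x : ℝ => g x) n x)
    (birkhoffAverage ℝ (· + α) (fun x : ℝ => f x) n x), hn x]

theorem uniformBirkhoffSubmodule_eq_top (hα : Irrational α) :
    uniformBirkhoffSubmodule α = ⊤ := by
  refine eq_top_iff.2 (span_fourier_closure_eq_top (T := 1) ▸ ?_)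
  refine Submodule.topologicalClosure_minimal _ ?_ (isClosed_uniformBirkhoffSubmodule α)
  exact Submodule.span_le.2 (range_subset_iff.2 (tendstoUniformly_birkhoffAverage_fourier hα))

theorem tendstoUniformly_birkhoffAverage_of_continuous (hα : Irrational α) {ψ : ℝ → ℝ}
    (hc : Continuous ψ) (hp : Periodic ψ 1) :
    TendstoUniformly (birkhoffAverage ℝ (· + α) ψ) (fun _ => ∫ y in (0:ℝ)..1, ψ y) atTop := by
  let Ψ : C(UnitAddCircle, ℂ) :=
    ⟨fun z => (hp.lift z : ℂ), continuous_coinduced_dom.2 (Complex.continuous_ofReal.comp hc)⟩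
  have hΨ : Ψ ∈ uniformBirkhoffSubmodule α :=
    uniformBirkhoffSubmodule_eq_top hα ▸ Submodule.mem_top
  convert Complex.reCLM.uniformContinuous.comp_tendstoUniformly hΨ using 1
  · ext n x
    exact (map_birkhoffAverage ℝ ℝ Complex.reCLM (· + α) (fun x : ℝ => Ψ x) n x).symm
  · ext
    simp [Ψ, intervalIntegral.integral_ofReal]

end Rotation

section SlidingAverage

variable {E : Type*} [NormedAddCommGroup E] [NormedSpace ℝ E] {f : ℝ → E} {δ T : ℝ}

/-- For `δ < 0` this is the average of `f` over `[x + δ, x]`. -/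
noncomputable def slidingAverage (δ : ℝ) (f : ℝ → E) (x : ℝ) : E := δ⁻¹ • ∫ t in x..x + δ, f t

theorem slidingAverage_eq_primitive_sub (hf : ∀ a b, IntervalIntegrable f volume a b) (x : ℝ) :
    slidingAverage δ f x = δ⁻¹ • ((∫ t in (0:ℝ)..x + δ, f t) - ∫ t in (0:ℝ)..x, f t) := by
  rw [slidingAverage, intervalIntegral.integral_interval_sub_left (hf _ _) (hf _ _)]

theorem continuous_slidingAverage (hf : ∀ a b, IntervalIntegrable f volume a b) :
    Continuous (slidingAverage δ f) := by
  have hF := intervalIntegral.continuous_primitive hf 0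
  simp_rw [funext (slidingAverage_eq_primitive_sub hf)]
  exact continuous_const.smul ((hF.comp (continuous_add_const δ)).sub hF)

theorem periodic_slidingAverage (hf : Periodic f T) : Periodic (slidingAverage δ f) T := fun x => by
  simp only [slidingAverage, add_right_comm x T δ, ← intervalIntegral.integral_comp_add_right]
  exact congrArg _ (intervalIntegral.integral_congr fun t _ => hf t)

theorem intervalIntegral_slidingAverage [CompleteSpace E] (hf : Periodic f T)
    (hfi : ∀ a b, IntervalIntegrable f volume a b) (hδ : δ ≠ 0) :
    ∫ x in (0:ℝ)..T, slidingAverage δ f x = ∫ x in (0:ℝ)..T, f x := by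
  set F : ℝ → E := fun u => ∫ t in (0:ℝ)..u, f t
  have hF : Continuous F := intervalIntegral.continuous_primitive hfi 0
  have hFi (a b : ℝ) : IntervalIntegrable F volume a b := hF.intervalIntegrable a b
  have hFi' (c a b : ℝ) : IntervalIntegrable (fun x => F (x + c)) volume a b :=
    (hF.comp (continuous_add_const c)).intervalIntegrable a b
  have hFT (u : ℝ) : F (u + T) - F u = ∫ x in (0:ℝ)..T, f x := by
    rw [sub_eq_iff_eq_add']
    simpa [F] using hf.intervalIntegral_add_eq_add 0 u hfi
  calc ∫ x in (0:ℝ)..T, slidingAverage δ f x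
      = δ⁻¹ • ((∫ x in (0:ℝ)..T, F (x + δ)) - ∫ x in (0:ℝ)..T, F x) := by
        rw [intervalIntegral.integral_congr (g := fun x => δ⁻¹ • (F (x + δ) - F x))
          fun x _ => slidingAverage_eq_primitive_sub hfi x, intervalIntegral.integral_smul,
          intervalIntegral.integral_sub (hFi' δ 0 T) (hFi 0 T)]
    _ = δ⁻¹ • ((∫ x in T..T + δ, F x) - ∫ x in (0:ℝ)..δ, F x) := by
        rw [intervalIntegral.integral_comp_add_right, zero_add,
          intervalIntegral.integral_interval_sub_interval_comm (hFi _ _) (hFi _ _) (hFi _ _),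
          intervalIntegral.integral_symm 0 δ, intervalIntegral.integral_symm T (T + δ)]
        congr 1
        abel
    _ = δ⁻¹ • ∫ x in (0:ℝ)..δ, (F (x + T) - F x) := by
        rw [intervalIntegral.integral_sub (hFi' T 0 δ) (hFi 0 δ),
          intervalIntegral.integral_comp_add_right, zero_add, add_comm δ T]
    _ = ∫ x in (0:ℝ)..T, f x := by
        simp_rw [hFT]
        rw [intervalIntegral.integral_const, sub_zero, smul_smul, inv_mul_cancel₀ hδ, one_smul]

end SlidingAverage

section SlidingAverageOrder

variable {f : ℝ → ℝ} {δ x c : ℝ}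

theorem le_slidingAverage (hδ : 0 < δ) (hf : IntervalIntegrable f volume x (x + δ))
    (h : ∀ t ∈ Icc x (x + δ), c ≤ f t) : c ≤ slidingAverage δ f x := by
  rw [slidingAverage, smul_eq_mul, le_inv_mul_iff₀ hδ]
  simpa [mul_comm] using intervalIntegral.integral_mono_on (by linarith)
    intervalIntegrable_const hf h

theorem slidingAverage_neg_le (hδ : 0 < δ) (hf : IntervalIntegrable f volume (x - δ) x)
    (h : ∀ t ∈ Icc (x - δ) x, f t ≤ c) : slidingAverage (-δ) f x ≤ c := by
  rw [slidingAverage, ← sub_eq_add_neg, intervalIntegral.integral_symm, smul_eq_mul, inv_neg,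
    neg_mul_neg, inv_mul_le_iff₀ hδ]
  simpa [mul_comm] using intervalIntegral.integral_mono_on (by linarith)
    hf intervalIntegrable_const h

end SlidingAverageOrder

section NearInteger

variable {x t δ : ℝ}

theorem floor_eq_or_norm_coe_le_of_mem_Icc (ht : t ∈ Icc x (x + δ)) :
    ⌊t⌋ = ⌊x⌋ ∨ ‖(t : UnitAddCircle)‖ ≤ δ := by
  rcases lt_or_ge t (⌊x⌋ + 1) with h | h
  · exact .inl (Int.floor_eq_iff.2 ⟨(Int.floor_le x).trans ht.1, h⟩)
  · refine .inr ((UnitAddCircle.norm_eq (x := t) ▸ round_le t (⌊x⌋ + 1)).trans ?_)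
    push_cast
    rw [abs_of_nonneg (by linarith)]
    linarith [Int.lt_floor_add_one x, ht.2]

theorem floor_eq_or_norm_coe_le_of_mem_Icc_sub (ht : t ∈ Icc (x - δ) x) :
    ⌊t⌋ = ⌊x⌋ ∨ ‖(t : UnitAddCircle)‖ ≤ δ := by
  rcases le_or_gt (⌊x⌋ : ℝ) t with h | h
  · exact .inl (Int.floor_eq_iff.2 ⟨h, ht.2.trans_lt (Int.lt_floor_add_one x)⟩)
  · refine .inr ((UnitAddCircle.norm_eq (x := t) ▸ round_le t ⌊x⌋).trans ?_)
    rw [abs_of_neg (by linarith)]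
    linarith [Int.floor_le x, ht.1]

noncomputable def nearIntegerIndicator (δ t : ℝ) : ℝ :=
  (Metric.closedBall (0 : UnitAddCircle) δ).indicator 1 (t : UnitAddCircle)

theorem nearIntegerIndicator_nonneg (δ t : ℝ) : 0 ≤ nearIntegerIndicator δ t :=
  Set.indicator_nonneg (fun _ _ => zero_le_one) _

theorem nearIntegerIndicator_eq_one (h : ‖(t : UnitAddCircle)‖ ≤ δ) :
    nearIntegerIndicator δ t = 1 :=
  Set.indicator_of_mem (mem_closedBall_zero_iff.2 h) _

theorem periodic_nearIntegerIndicator (δ : ℝ) : Periodic (nearIntegerIndicator δ) 1 := fun t => by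
  simp only [nearIntegerIndicator, AddCircle.coe_add_period]

theorem intervalIntegrable_nearIntegerIndicator (δ a b : ℝ) :
    IntervalIntegrable (nearIntegerIndicator δ) volume a b := by
  refine (intervalIntegrable_const (c := (1:ℝ))).mono_fun ?_ (ae_of_all _ fun t => ?_)
  · exact ((measurable_const.indicator Metric.isClosed_closedBall.measurableSet).comp
      AddCircle.measurable_mk').aestronglyMeasurable
  · change ‖nearIntegerIndicator δ t‖ ≤ ‖(1:ℝ)‖
    rw [Real.norm_eq_abs, Real.norm_eq_abs, abs_one,
      abs_of_nonneg (nearIntegerIndicator_nonneg δ t)]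
    exact Set.indicator_le_self' (fun _ _ => zero_le_one) _

theorem intervalIntegral_nearIntegerIndicator_le (hδ : 0 ≤ δ) :
    ∫ t in (0:ℝ)..1, nearIntegerIndicator δ t ≤ 2 * δ := by
  have h := UnitAddCircle.intervalIntegral_preimage 0
    ((Metric.closedBall (0 : UnitAddCircle) δ).indicator (1 : UnitAddCircle → ℝ))
  rw [zero_add, integral_indicator_one Metric.isClosed_closedBall.measurableSet] at h
  unfold nearIntegerIndicator
  rw [h, Measure.real, AddCircle.volume_closedBall, ENNReal.toReal_ofReal (by positivity)]
  exact min_le_right _ _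

end NearInteger

structure IsPeriodicSandwich (φ L U : ℝ → ℝ) (ε : ℝ) : Prop where
  continuous_lower : Continuous L
  continuous_upper : Continuous U
  periodic_lower : Periodic L 1
  periodic_upper : Periodic U 1
  lower_le : L ≤ φ
  le_upper : φ ≤ U
  integral_lower : (∫ y in (0:ℝ)..1, φ y) - ε ≤ ∫ y in (0:ℝ)..1, L y
  integral_upper : ∫ y in (0:ℝ)..1, U y ≤ (∫ y in (0:ℝ)..1, φ y) + ε

theorem IsPeriodicSandwich.sub {φ ψ L U L' U' : ℝ → ℝ} {ε ε' : ℝ}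
    (h : IsPeriodicSandwich φ L U ε) (h' : IsPeriodicSandwich ψ L' U' ε')
    (hφ : IntervalIntegrable φ volume 0 1) (hψ : IntervalIntegrable ψ volume 0 1) :
    IsPeriodicSandwich (φ - ψ) (L - U') (U - L') (ε + ε') where
  continuous_lower := h.continuous_lower.sub h'.continuous_upper
  continuous_upper := h.continuous_upper.sub h'.continuous_lower
  periodic_lower := h.periodic_lower.sub h'.periodic_upper
  periodic_upper := h.periodic_upper.sub h'.periodic_lower
  lower_le := sub_le_sub h.lower_le h'.le_upper
  le_upper := sub_le_sub h.le_upper h'.lower_le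
  integral_lower := by
    simp only [Pi.sub_apply]
    rw [intervalIntegral.integral_sub hφ hψ, intervalIntegral.integral_sub
      (h.continuous_lower.intervalIntegrable 0 1) (h'.continuous_upper.intervalIntegrable 0 1)]
    linarith [h.integral_lower, h'.integral_upper]
  integral_upper := by
    simp only [Pi.sub_apply]
    rw [intervalIntegral.integral_sub hφ hψ, intervalIntegral.integral_sub
      (h.continuous_upper.intervalIntegrable 0 1) (h'.continuous_lower.intervalIntegrable 0 1)]
    linarith [h.integral_upper, h'.integral_lower]

section PeriodizedMonotone

variable {m : ℝ → ℝ} {x t δ : ℝ}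

theorem intervalIntegrable_comp_fract (hm : Monotone m) (a b : ℝ) :
    IntervalIntegrable (fun t => m (Int.fract t)) volume a b := by
  refine (intervalIntegrable_const (c := max |m 0| |m 1|)).mono_fun
    (hm.measurable.comp measurable_fract).aestronglyMeasurable (ae_of_all _ fun t => ?_)
  change |m (Int.fract t)| ≤ ‖max |m 0| |m 1|‖
  rw [Real.norm_of_nonneg (le_max_of_le_left (abs_nonneg _)), abs_le]
  have h0 := hm (Int.fract_nonneg t)
  have h1 := hm (Int.fract_lt_one t).le
  constructor <;> cases abs_cases (m 0) <;> cases abs_cases (m 1) <;>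
    linarith [le_max_left |m 0| |m 1|, le_max_right |m 0| |m 1|]

theorem comp_fract_le_add_of_mem_Icc (hm : Monotone m) (ht : t ∈ Icc x (x + δ)) :
    m (Int.fract x) ≤ m (Int.fract t) + (m 1 - m 0) * nearIntegerIndicator δ t := by
  have hJ : 0 ≤ m 1 - m 0 := sub_nonneg.2 (hm zero_le_one)
  rcases floor_eq_or_norm_coe_le_of_mem_Icc ht with h | h
  · have : m (Int.fract x) ≤ m (Int.fract t) :=
      hm (by rw [Int.fract, Int.fract, h]; linarith [ht.1])
    nlinarith [nearIntegerIndicator_nonneg δ t]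
  · rw [nearIntegerIndicator_eq_one h]
    linarith [hm (Int.fract_lt_one x).le, hm (Int.fract_nonneg t)]

theorem sub_le_comp_fract_of_mem_Icc (hm : Monotone m) (ht : t ∈ Icc (x - δ) x) :
    m (Int.fract t) - (m 1 - m 0) * nearIntegerIndicator δ t ≤ m (Int.fract x) := by
  have hJ : 0 ≤ m 1 - m 0 := sub_nonneg.2 (hm zero_le_one)
  rcases floor_eq_or_norm_coe_le_of_mem_Icc_sub ht with h | h
  · have : m (Int.fract t) ≤ m (Int.fract x) :=
      hm (by rw [Int.fract, Int.fract, h]; linarith [ht.2])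
    nlinarith [nearIntegerIndicator_nonneg δ t]
  · rw [nearIntegerIndicator_eq_one h]
    linarith [hm (Int.fract_lt_one t).le, hm (Int.fract_nonneg x)]

theorem exists_isPeriodicSandwich_comp_fract (hm : Monotone m) {ε : ℝ} (hε : 0 < ε) :
    ∃ L U, IsPeriodicSandwich (fun x => m (Int.fract x)) L U ε := by
  set J := m 1 - m 0
  have hJ : 0 ≤ J := sub_nonneg.2 (hm zero_le_one)
  set δ := ε / (2 * J + 1)
  have hδ : 0 < δ := by positivity
  have hJδ : J * ∫ t in (0:ℝ)..1, nearIntegerIndicator δ t ≤ ε := by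
    calc J * ∫ t in (0:ℝ)..1, nearIntegerIndicator δ t ≤ J * (2 * δ) :=
          mul_le_mul_of_nonneg_left (intervalIntegral_nearIntegerIndicator_le hδ.le) hJ
      _ ≤ ε := by
          rw [← mul_assoc, ← mul_div_assoc, div_le_iff₀ (by positivity)]
          nlinarith
  have hTi := intervalIntegrable_comp_fract hm
  have hχi := intervalIntegrable_nearIntegerIndicator δ
  have hTp : Periodic (fun x => m (Int.fract x)) 1 := (Int.fract_periodic ℝ).comp m
  have hχp := periodic_nearIntegerIndicator δ
  set lower := fun t => m (Int.fract t) - J * nearIntegerIndicator δ t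
  set upper := fun t => m (Int.fract t) + J * nearIntegerIndicator δ t
  have hli (a b : ℝ) : IntervalIntegrable lower volume a b :=
    (hTi a b).sub ((hχi a b).const_mul J)
  have hui (a b : ℝ) : IntervalIntegrable upper volume a b :=
    (hTi a b).add ((hχi a b).const_mul J)
  have hlp : Periodic lower 1 := hTp.sub (hχp.comp (J * ·))
  have hup : Periodic upper 1 := hTp.add (hχp.comp (J * ·))
  refine ⟨slidingAverage (-δ) lower, slidingAverage δ upper,
    { continuous_lower := continuous_slidingAverage hli
      continuous_upper := continuous_slidingAverage hui
      periodic_lower := periodic_slidingAverage hlp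
      periodic_upper := periodic_slidingAverage hup
      lower_le := fun x => slidingAverage_neg_le hδ (hli _ _) fun t ht =>
        sub_le_comp_fract_of_mem_Icc hm ht
      le_upper := fun x => le_slidingAverage hδ (hui _ _) fun t ht =>
        comp_fract_le_add_of_mem_Icc hm ht
      integral_lower := ?_
      integral_upper := ?_ }⟩
  · rw [intervalIntegral_slidingAverage hlp hli (neg_ne_zero.2 hδ.ne'),
      intervalIntegral.integral_sub (hTi 0 1) ((hχi 0 1).const_mul J),
      intervalIntegral.integral_const_mul]
    linarith
  · rw [intervalIntegral_slidingAverage hup hui hδ.ne',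
      intervalIntegral.integral_add (hTi 0 1) ((hχi 0 1).const_mul J),
      intervalIntegral.integral_const_mul]
    linarith

end PeriodizedMonotone

theorem exists_isPeriodicSandwich_of_boundedVariationOn {φ : ℝ → ℝ} (hper : Periodic φ 1)
    (hbv : BoundedVariationOn φ (Icc 0 1)) {ε : ℝ} (hε : 0 < ε) :
    ∃ L U, IsPeriodicSandwich φ L U ε := by
  obtain ⟨p, q, hp, hq, rfl⟩ := hbv.locallyBoundedVariationOn.exists_monotoneOn_sub_monotoneOn
  have hclamp {r : ℝ → ℝ} (hr : MonotoneOn r (Icc 0 1)) :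
      Monotone fun x => r (projIcc (0:ℝ) 1 zero_le_one x) := fun x y hxy =>
    hr (projIcc (0:ℝ) 1 zero_le_one x).2 (projIcc (0:ℝ) 1 zero_le_one y).2
      (monotone_projIcc _ hxy)
  have hφ : p - q = (fun x => p (projIcc (0:ℝ) 1 zero_le_one (Int.fract x))) -
      fun x => q (projIcc (0:ℝ) 1 zero_le_one (Int.fract x)) := by
    ext x
    have hx : Int.fract x ∈ Icc (0:ℝ) 1 := ⟨Int.fract_nonneg x, (Int.fract_lt_one x).le⟩
    have hφx := hper.sub_int_mul_eq (x := x) ⌊x⌋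
    rw [mul_one, Int.self_sub_floor] at hφx
    rw [← hφx]
    simp only [Pi.sub_apply, projIcc_of_mem _ hx]
  obtain ⟨L, U, hLU⟩ := exists_isPeriodicSandwich_comp_fract (hclamp hp) (half_pos hε)
  obtain ⟨L', U', hLU'⟩ := exists_isPeriodicSandwich_comp_fract (hclamp hq) (half_pos hε)
  refine ⟨L - U', U - L', hφ ▸ add_halves ε ▸ hLU.sub hLU' ?_ ?_⟩
  exacts [intervalIntegrable_comp_fract (hclamp hp) 0 1,
    intervalIntegrable_comp_fract (hclamp hq) 0 1]

theorem tendstoUniformly_birkhoffAverage_of_boundedVariationOn {α : ℝ} (hα : Irrational α)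
    {φ : ℝ → ℝ} (hper : Periodic φ 1) (hbv : BoundedVariationOn φ (Icc 0 1)) :
    TendstoUniformly (birkhoffAverage ℝ (· + α) φ) (fun _ => ∫ y in (0:ℝ)..1, φ y) atTop := by
  refine tendstoUniformly_birkhoffAverage_of_forall_sandwich fun ε hε => ?_
  obtain ⟨L, U, h⟩ := exists_isPeriodicSandwich_of_boundedVariationOn hper hbv hε
  exact ⟨L, U, _, _, h.lower_le, h.le_upper, h.integral_lower, h.integral_upper,
    tendstoUniformly_birkhoffAverage_of_continuous hα h.continuous_lower h.periodic_lower,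
    tendstoUniformly_birkhoffAverage_of_continuous hα h.continuous_upper h.periodic_upper⟩

theorem exists_abs_birkhoffZ_sub_eq (α : ℝ) (φ : ℝ → ℝ) (n : ℤ) (x c : ℝ) :
    ∃ y, |birkhoffZ α φ n x - n * c| = |birkhoff α φ n.natAbs y - n.natAbs * c| := by
  rcases le_or_gt 0 n with h | h
  · lift n to ℕ using h
    exact ⟨x, by simp [birkhoffZ]⟩
  · obtain ⟨k, rfl⟩ := Int.exists_eq_neg_ofNat h.le
    refine ⟨x - k * α, ?_⟩
    rw [birkhoffZ, if_neg (by omega), neg_neg, Int.toNat_natCast, Int.natAbs_neg,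
      Int.natAbs_natCast, ← abs_neg]
    congr 1
    push_cast
    ring

theorem eventually_abs_birkhoff_sub_lt {α c : ℝ} {φ : ℝ → ℝ}
    (h : TendstoUniformly (birkhoffAverage ℝ (· + α) φ) (fun _ => c) atTop) {ε : ℝ}
    (hε : 0 < ε) :
    ∀ᶠ n : ℕ in atTop, ∀ x, |birkhoff α φ n x - n * c| < ε * n := by
  filter_upwards [Metric.tendstoUniformly_iff.1 h ε hε, eventually_gt_atTop 0] with n hn hpos x
  have hn' : (0:ℝ) < n := Nat.cast_pos.2 hpos
  have hx := hn x
  rw [dist_comm, Real.dist_eq, birkhoffAverage, smul_eq_mul] at hx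
  calc |birkhoff α φ n x - n * c| = n * |(n:ℝ)⁻¹ * birkhoffSum (· + α) φ n x - c| := by
        rw [← abs_of_pos hn', ← abs_mul, abs_of_pos hn', mul_sub, mul_inv_cancel_left₀ hn'.ne',
          birkhoffSum_add_right]
        rfl
    _ < ε * n := by rw [mul_comm ε]; exact mul_lt_mul_of_pos_left hx hn'

/-- Uniform ergodic averaging for BV functions over an irrational rotation: for every `ε > 0`
there is `n_ε` such that for all `|n| ≥ n_ε` and all `x`,
`|φ^{(n)}(x) − n ∫ φ| < ε |n|`. -/
theorem bv_uniform_birkhoff (α : ℝ) (hα : Irrational α) (φ : ℝ → ℝ)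
    (hper : Function.Periodic φ 1) (hbv : BoundedVariationOn φ (Set.Icc 0 1)) :
    ∀ ε > 0, ∃ nε : ℕ, ∀ n : ℤ, (nε : ℤ) ≤ |n| → ∀ x : ℝ,
      |birkhoffZ α φ n x - (n : ℝ) * ∫ y in (0:ℝ)..1, φ y| < ε * |(n : ℝ)| := by
  intro ε hε
  obtain ⟨N, hN⟩ := eventually_atTop.1 <| eventually_abs_birkhoff_sub_lt
    (tendstoUniformly_birkhoffAverage_of_boundedVariationOn hα hper hbv) hε
  refine ⟨N, fun n hn x => ?_⟩
  obtain ⟨y, hy⟩ := exists_abs_birkhoffZ_sub_eq α φ n x (∫ y in (0:ℝ)..1, φ y)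
  rw [← Int.natCast_natAbs] at hn
  rw [hy, ← Int.cast_abs, ← Nat.cast_natAbs]
  exact hN n.natAbs (by omega) y
end

section
/- Let β be irrational with denominators (q'_n). Fix y, y' ∈ 𝕋 with ‖y − y'‖ < 1/(6 q'_n). Then at least one of the following holds: (i) 0 ∉ ⋃_{k=0}^{⌊q'_{n+1}/6⌋} R_β^k[y, y']; (ii) 0 ∉ ⋃_{k=0}^{⌊q'_{n+1}/6⌋} R_β^{−k}[y, y']; (iii) 0 ∈ ⋃_{k=0}^{q'_n − 1} R_β^k[y, y']. -/
theorem abs_le_abs_add_of_mul_nonneg {R : Type*} [Ring R] [LinearOrder R] [IsStrictOrderedRing R]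
    {a b : R} (h : 0 ≤ a * b) : |b| ≤ |a + b| := by
  rw [(abs_add_eq_add_abs_iff a b).2 (mul_nonneg_iff.1 h)]
  exact le_add_of_nonneg_left (abs_nonneg a)

theorem mem_uIcc_add_const_iff {G : Type*} [AddCommGroup G] [LinearOrder G]
    [IsOrderedAddMonoid G] {a b c t : G} :
    c ∈ Set.uIcc (a + t) (b + t) ↔ c - t ∈ Set.uIcc a b := by
  rw [← Set.preimage_sub_const_uIcc]; rfl

theorem mem_uIcc_sub_const_iff {G : Type*} [AddCommGroup G] [LinearOrder G]
    [IsOrderedAddMonoid G] {a b c t : G} :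
    c ∈ Set.uIcc (a - t) (b - t) ↔ c + t ∈ Set.uIcc a b := by
  rw [← Set.preimage_add_const_uIcc]; rfl

theorem sub_mul_mem_uIcc {R : Type*} [CommRing R] [LinearOrder R] [IsStrictOrderedRing R]
    {v θ i s : R} (hi : 0 ≤ i) (his : i ≤ s) : v - i * θ ∈ Set.uIcc v (v - s * θ) := by
  rw [Set.mem_uIcc]
  rcases le_total 0 θ with hθ | hθ
  · right; constructor <;> nlinarith
  · left; constructor <;> nlinarith

theorem Nat.exists_mul_mem_Ico (b : ℕ) {d : ℕ} (hd : 0 < d) :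
    ∃ i, b ≤ i * d ∧ i * d < b + d := by
  refine ⟨(b + d - 1) / d, ?_⟩
  have h := Nat.div_add_mod (b + d - 1) d
  have hlt := Nat.mod_lt (b + d - 1) hd
  rw [mul_comm] at h
  omega

namespace GenContFract

theorem one_le_of_den {K : Type*} [Field K] [LinearOrder K] [IsStrictOrderedRing K] [FloorRing K]
    (v : K) : ∀ n, 1 ≤ (GenContFract.of v).dens n
  | 0 => zeroth_den_eq_one.ge
  | n + 1 => (one_le_of_den v n).trans of_den_mono

variable {β : ℝ}

theorem of_not_terminatedAt_of_irrational (hβ : Irrational β) (n : ℕ) :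
    ¬(GenContFract.of β).TerminatedAt n := fun h ↦ by
  obtain ⟨r, rfl⟩ := (terminates_iff_rat β).1 ⟨n, h⟩
  exact Rat.not_irrational r hβ

theorem exists_of_s_get?_eq_int (hβ : Irrational β) (n : ℕ) :
    ∃ z : ℤ, 1 ≤ z ∧ (GenContFract.of β).s.get? n = some ⟨1, z⟩ := by
  obtain ⟨gp, hgp⟩ := Option.ne_none_iff_exists'.1 (of_not_terminatedAt_of_irrational hβ n)
  obtain ⟨ha, z, hz⟩ := of_partNum_eq_one_and_exists_int_partDen_eq hgp
  have hb : (1 : ℝ) ≤ gp.b := of_one_le_get?_partDen (partDen_eq_s_b hgp)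
  refine ⟨z, by exact_mod_cast hz ▸ hb, ?_⟩
  rw [hgp, ← ha, ← hz]

theorem exists_int_eq_of_num (hβ : Irrational β) :
    ∀ n, ∃ p : ℤ, (GenContFract.of β).nums n = p
  | 0 => ⟨⌊β⌋, by rw [zeroth_num_eq_h, of_h_eq_floor]⟩
  | 1 => by
    obtain ⟨z, -, hz⟩ := exists_of_s_get?_eq_int hβ 0
    exact ⟨z * ⌊β⌋ + 1, by rw [first_num_eq hz, of_h_eq_floor]; push_cast; ring⟩
  | n + 2 => by
    obtain ⟨a, ha⟩ := exists_int_eq_of_num hβ n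
    obtain ⟨b, hb⟩ := exists_int_eq_of_num hβ (n + 1)
    obtain ⟨z, -, hz⟩ := exists_of_s_get?_eq_int hβ (n + 1)
    exact ⟨z * b + a, by rw [nums_recurrence hz ha hb]; push_cast; ring⟩

theorem of_den_add_den_le (hβ : Irrational β) (n : ℕ) :
    (GenContFract.of β).dens n + (GenContFract.of β).dens (n + 1) ≤
      (GenContFract.of β).dens (n + 2) := by
  obtain ⟨z, hz1, hz⟩ := exists_of_s_get?_eq_int hβ (n + 1)
  rw [dens_recurrence hz rfl rfl]
  have hz1' : (1 : ℝ) ≤ z := by exact_mod_cast hz1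
  nlinarith [one_le_of_den β (n + 1)]

theorem neg_one_pow_mul_sub_convs_pos (hβ : Irrational β) (n : ℕ) :
    0 < (-1) ^ n * (β - (GenContFract.of β).convs n) := by
  obtain ⟨ifp', hstream'⟩ := Option.ne_none_iff_exists'.1 <|
    (not_congr of_terminatedAt_n_iff_succ_nth_intFractPair_stream_eq_none).1
      (of_not_terminatedAt_of_irrational hβ n)
  obtain ⟨ifp, hstream, hfr, -⟩ := IntFractPair.succ_nth_stream_eq_some_iff.1 hstream'
  have hB : 0 < ((GenContFract.of β).contsAux (n + 1)).b := by
    rw [← nth_cont_eq_succ_nth_contAux, ← den_eq_conts_b]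
    linarith [one_le_of_den β n]
  have hpB : 0 ≤ ((GenContFract.of β).contsAux n).b := zero_le_of_contsAux_b
  have hfr' : 0 < ifp.fr := (IntFractPair.nth_stream_fr_nonneg hstream).lt_of_ne' hfr
  rw [sub_convs_eq hstream]
  simp only [if_neg hfr, mul_div, ← pow_add, ← two_mul, pow_mul, neg_one_sq, one_pow]
  positivity

end GenContFract

def IsCFNums (α : ℝ) (p : ℕ → ℤ) : Prop :=
  ∀ n, (p n : ℝ) = (GenContFract.of α).nums n

theorem exists_isCFNums {β : ℝ} (hβ : Irrational β) : ∃ p, IsCFNums β p := by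
  choose p hp using GenContFract.exists_int_eq_of_num hβ
  exact ⟨p, fun n ↦ (hp n).symm⟩

section Convergents

variable {β : ℝ} {q : ℕ → ℕ} {p : ℕ → ℤ}

theorem IsCFDenoms.one_le_s3 (hq : IsCFDenoms β q) (n : ℕ) : 1 ≤ q n := by
  exact_mod_cast (hq n).symm ▸ GenContFract.one_le_of_den β n

theorem IsCFDenoms.cast_pos (hq : IsCFDenoms β q) (n : ℕ) : (0 : ℝ) < q n := by
  exact_mod_cast hq.one_le_s3 n

theorem IsCFDenoms.zero_eq_one (hq : IsCFDenoms β q) : q 0 = 1 := by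
  exact_mod_cast (hq 0).trans GenContFract.zeroth_den_eq_one

theorem IsCFDenoms.le_succ_s3 (hq : IsCFDenoms β q) (n : ℕ) : q n ≤ q (n + 1) := by
  exact_mod_cast (hq n).trans_le (GenContFract.of_den_mono.trans_eq (hq (n + 1)).symm)

theorem IsCFDenoms.add_le (hβ : Irrational β) (hq : IsCFDenoms β q) (n : ℕ) :
    q n + q (n + 1) ≤ q (n + 2) := by
  have h := GenContFract.of_den_add_den_le hβ n
  rw [← hq, ← hq, ← hq] at h
  exact_mod_cast h

theorem IsCFNums.determinant (hβ : Irrational β) (hq : IsCFDenoms β q) (hp : IsCFNums β p) (n : ℕ) :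
    p n * q (n + 1) - q n * p (n + 1) = (-1 : ℤ) ^ (n + 1) := by
  have h := SimpContFract.determinant (s := SimpContFract.of β)
    (GenContFract.of_not_terminatedAt_of_irrational hβ n)
  rw [SimpContFract.of, ← hp, ← hp, ← hq, ← hq] at h
  exact_mod_cast h

theorem IsCFNums.neg_one_pow_mul_err_pos (hβ : Irrational β) (hq : IsCFDenoms β q)
    (hp : IsCFNums β p) (n : ℕ) : 0 < (-1) ^ n * (q n * β - p n) := by
  have h := GenContFract.neg_one_pow_mul_sub_convs_pos hβ n
  rw [GenContFract.conv_eq_num_div_den, ← hp, ← hq] at h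
  have hqn := hq.cast_pos n
  have : (q n : ℝ) * β - p n = q n * (β - p n / q n) := by field_simp
  rw [this, mul_left_comm]
  positivity

theorem IsCFNums.err_mul_err_neg (hβ : Irrational β) (hq : IsCFDenoms β q)
    (hp : IsCFNums β p) (n : ℕ) : (q (n + 1) * β - p (n + 1)) * (q n * β - p n) < 0 := by
  have h := mul_pos (hp.neg_one_pow_mul_err_pos hβ hq (n + 1))
    (hp.neg_one_pow_mul_err_pos hβ hq n)
  have hsq : ((-1 : ℝ) ^ n) ^ 2 = 1 := by
    rw [← pow_mul, mul_comm, pow_mul, neg_one_sq, one_pow]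
  have : (-1) ^ (n + 1) * ((q (n + 1) : ℝ) * β - p (n + 1)) * ((-1) ^ n * (q n * β - p n)) =
      -((q (n + 1) * β - p (n + 1)) * (q n * β - p n)) := by
    linear_combination (-((q (n + 1) * β - p (n + 1)) * (q n * β - p n))) * hsq
  linarith

theorem IsCFNums.abs_err_add_abs_err (hβ : Irrational β) (hq : IsCFDenoms β q)
    (hp : IsCFNums β p) (n : ℕ) :
    q n * |q (n + 1) * β - p (n + 1)| + q (n + 1) * |q n * β - p n| = 1 := by
  have habs : ∀ k, |(q k : ℝ) * β - p k| = (-1) ^ k * (q k * β - p k) := fun k ↦ by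
    rw [← abs_of_pos (hp.neg_one_pow_mul_err_pos hβ hq k), abs_mul, abs_neg_one_pow, one_mul]
  have hdet : (p n * q (n + 1) - q n * p (n + 1) : ℝ) = (-1) ^ (n + 1) := by
    exact_mod_cast hp.determinant hβ hq n
  have hsq : ((-1 : ℝ) ^ (n + 1)) ^ 2 = 1 := by
    rw [← pow_mul, mul_comm, pow_mul, neg_one_sq, one_pow]
  rw [habs, habs]
  linear_combination (-1 : ℝ) ^ (n + 1) * hdet + hsq

theorem IsCFNums.mul_abs_err_lt_one (hβ : Irrational β) (hq : IsCFDenoms β q)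
    (hp : IsCFNums β p) (n : ℕ) : q (n + 1) * |q n * β - p n| < 1 := by
  have hne : (q (n + 1) : ℝ) * β - p (n + 1) ≠ 0 := fun h ↦ by
    simpa [h] using hp.neg_one_pow_mul_err_pos hβ hq (n + 1)
  have hpos := mul_pos (hq.cast_pos n) (abs_pos.2 hne)
  linarith [hp.abs_err_add_abs_err hβ hq n]

theorem IsCFNums.one_le_two_mul_abs_err (hβ : Irrational β) (hq : IsCFDenoms β q)
    (hp : IsCFNums β p) (n : ℕ) : 1 ≤ 2 * (q (n + 1) * |q n * β - p n|) := by
  have h2 : 2 * (q n : ℝ) ≤ q (n + 2) := by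
    have := hq.add_le hβ n
    have := hq.le_succ_s3 n
    exact_mod_cast (by omega : 2 * q n ≤ q (n + 2))
  have hlt := hp.mul_abs_err_lt_one hβ hq (n + 1)
  have := hp.abs_err_add_abs_err hβ hq n
  nlinarith [abs_nonneg ((q (n + 1) : ℝ) * β - p (n + 1))]

theorem IsCFNums.abs_err_le_abs_sub (hβ : Irrational β) (hq : IsCFDenoms β q)
    (hp : IsCFNums β p) {n r : ℕ} (hr0 : 0 < r) (hr : r < q (n + 1)) (m : ℤ) :
    |(q n : ℝ) * β - p n| ≤ |r * β - m| := by
  have hdet := hp.determinant hβ hq n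
  set ε : ℤ := (-1) ^ (n + 1)
  have hε : ε * ε = 1 := by rw [← pow_two, ← pow_mul, mul_comm, pow_mul, neg_one_sq, one_pow]
  -- the coordinates of `(r, m)` in the unimodular basis `(q (n + 1), p (n + 1)), (q n, p n)`
  set x : ℤ := ε * (r * p n - m * q n)
  set y : ℤ := ε * (m * q (n + 1) - r * p (n + 1))
  have hxq : x * q (n + 1) + y * q n = r := by linear_combination (r * ε) * hdet + r * hε
  have hxp : x * p (n + 1) + y * p n = m := by linear_combination (m * ε) * hdet + m * hε
  have hsplit : (r : ℝ) * β - m = x * (q (n + 1) * β - p (n + 1)) + y * (q n * β - p n) := by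
    have hxq' : (x * q (n + 1) + y * q n : ℝ) = r := by exact_mod_cast hxq
    have hxp' : (x * p (n + 1) + y * p n : ℝ) = m := by exact_mod_cast hxp
    linear_combination hxp' - β * hxq'
  have hqn := hq.one_le_s3 n
  have hy : y ≠ 0 := by
    rintro hy
    rw [hy] at hxq
    rcases le_or_gt x 0 with hx | hx <;> nlinarith
  have hxy : x * y ≤ 0 := by
    by_contra! h
    rcases pos_and_pos_or_neg_and_neg_of_mul_pos h with ⟨hx, hy⟩ | ⟨hx, hy⟩ <;> nlinarith
  -- the two errors alternate in sign, so the two summands of `hsplit` do not cancel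
  have hsame : 0 ≤ (x * (q (n + 1) * β - p (n + 1))) * (y * (q n * β - p n)) := by
    have hxy' : (x * y : ℝ) ≤ 0 := by exact_mod_cast hxy
    nlinarith [hp.err_mul_err_neg hβ hq n]
  calc |(q n : ℝ) * β - p n| ≤ |(y : ℝ)| * |q n * β - p n| :=
        le_mul_of_one_le_left (abs_nonneg _) (by exact_mod_cast Int.one_le_abs hy)
    _ = |y * (q n * β - p n)| := (abs_mul _ _).symm
    _ ≤ |r * β - m| := hsplit ▸ abs_le_abs_add_of_mul_nonneg hsame

theorem IsCFDenoms.eq_zero_of_two_mul_abs_lt (hβ : Irrational β) (hq : IsCFDenoms β q)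
    {n r : ℕ} {m : ℤ} (hr : r < q n) (h : 2 * (q n * |r * β - m|) < 1) : r = 0 ∧ m = 0 := by
  have hqn := hq.cast_pos n
  have hr0 : r = 0 := by
    by_contra hr0
    cases n with
    | zero => rw [hq.zero_eq_one] at hr; omega
    | succ k =>
      obtain ⟨p, hp⟩ := exists_isCFNums hβ
      have := hp.abs_err_le_abs_sub hβ hq (Nat.pos_of_ne_zero hr0) hr m
      have := hp.one_le_two_mul_abs_err hβ hq k
      nlinarith
  refine ⟨hr0, ?_⟩
  subst hr0
  have hq1 : (1 : ℝ) ≤ q n := by exact_mod_cast hq.one_le_s3 n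
  have : |(m : ℝ)| < 1 := by
    rw [Nat.cast_zero, zero_mul, zero_sub, abs_neg] at h
    nlinarith [abs_nonneg (m : ℝ)]
  exact Int.abs_lt_one_iff.1 (by exact_mod_cast this)

theorem IsCFNums.exists_eq_mul_of_abs_sub_lt (hβ : Irrational β) (hq : IsCFDenoms β q)
    (hp : IsCFNums β p) {n j : ℕ} {M : ℤ} (hj : 3 * j ≤ q (n + 1))
    (hM : 6 * (q n * |j * β - M|) < 1) :
    ∃ s : ℕ, j = s * q n ∧ (j : ℝ) * β - M = s * (q n * β - p n) := by
  obtain ⟨s, r, hr, hjsr⟩ : ∃ s r, r < q n ∧ s * q n + r = j :=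
    ⟨j / q n, j % q n, Nat.mod_lt j (hq.one_le_s3 n), by rw [mul_comm]; exact Nat.div_add_mod j (q n)⟩
  have hs : 3 * (q n * (s * |q n * β - p n|)) ≤ 1 := by
    have h1 : 3 * (s * q n : ℝ) ≤ q (n + 1) := by
      exact_mod_cast (by omega : 3 * (s * q n) ≤ q (n + 1))
    have h2 := hp.mul_abs_err_lt_one hβ hq n
    nlinarith [abs_nonneg ((q n : ℝ) * β - p n)]
  have hsplit : (r : ℝ) * β - (M - s * p n : ℤ) = (j * β - M) - s * (q n * β - p n) := by
    have : (s * q n + r : ℝ) = j := by exact_mod_cast hjsr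
    push_cast
    linear_combination β * this
  have hsmall : 2 * (q n * |r * β - (M - s * p n : ℤ)|) < 1 := by
    have htri := abs_sub ((j : ℝ) * β - M) (s * (q n * β - p n))
    rw [abs_mul, Nat.abs_cast] at htri
    rw [hsplit]
    nlinarith [hq.cast_pos n]
  obtain ⟨hr0, hM0⟩ := hq.eq_zero_of_two_mul_abs_lt hβ hr hsmall
  refine ⟨s, by omega, ?_⟩
  rw [hr0, hM0] at hsplit
  push_cast at hsplit
  linarith

theorem exists_forward_hit_of_hits (hβ : Irrational β) (hq : IsCFDenoms β q) {n a b : ℕ}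
    {m₁ m₂ : ℤ} {y y' : ℝ} (hclose : 6 * (q n * |y - y'|) < 1) (ha : 6 * a ≤ q (n + 1))
    (hb : 6 * b ≤ q (n + 1)) (hqa : q n ≤ a) (hm₁ : (m₁ : ℝ) - a * β ∈ Set.uIcc y y')
    (hm₂ : (m₂ : ℝ) + b * β ∈ Set.uIcc y y') :
    ∃ k < q n, ∃ m : ℤ, (m : ℝ) - k * β ∈ Set.uIcc y y' := by
  obtain ⟨p, hp⟩ := exists_isCFNums hβ
  have hreturn : 6 * (q n * |(a + b : ℕ) * β - (m₁ - m₂ : ℤ)|) < 1 := by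
    have hdist := Set.abs_sub_le_of_uIcc_subset_uIcc (Set.uIcc_subset_uIcc hm₁ hm₂)
    have heq : ((a + b : ℕ) : ℝ) * β - (m₁ - m₂ : ℤ) = m₂ + b * β - (m₁ - a * β) := by
      push_cast; ring
    rw [abs_sub_comm] at hclose
    rw [heq]
    nlinarith [hq.cast_pos n]
  obtain ⟨s, hs, hsθ⟩ := hp.exists_eq_mul_of_abs_sub_lt hβ hq (by omega) hreturn
  obtain ⟨i, hbi, hib⟩ := Nat.exists_mul_mem_Ico b (hq.one_le_s3 n)
  have his : (i : ℝ) ≤ s := by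
    exact_mod_cast (Nat.lt_of_mul_lt_mul_right (a := q n) (by omega)).le
  have hu : (m₁ : ℝ) - a * β = m₂ + b * β - s * (q n * β - p n) := by
    push_cast at hsθ; linarith
  rw [hu] at hm₁
  have hw := Set.ordConnected_uIcc.uIcc_subset hm₂ hm₁ (sub_mul_mem_uIcc i.cast_nonneg his)
  refine ⟨i * q n - b, by omega, m₂ + i * p n, ?_⟩
  convert hw using 1
  rw [Nat.cast_sub hbi]
  push_cast
  ring

end Convergents

/-- Lemma 3.3 of Kanigowski–Solomko: if `‖y − y'‖ < 1/(6 q'_n)` (with representatives chosen so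
that `|y − y'|` realizes the circle distance, i.e. the arc `[y,y']` is the segment between the
representatives), then either the forward iterates `R_β^k [y,y']`, `0 ≤ k ≤ ⌊q'_{n+1}/6⌋`, all
avoid `0` (mod 1), or the backward iterates do, or `0` is hit within the first `q'_n` forward
iterates. Here `0 ∈ R_β^k[y,y']` is expressed as the segment containing an integer. -/
theorem three_cases_hitting_zero (β : ℝ) (hβ : Irrational β) (q' : ℕ → ℕ)
    (hq : IsCFDenoms β q') (n : ℕ) (y y' : ℝ)
    (hclose : |y - y'| < 1 / (6 * (q' n : ℝ))) :
    (∀ k : ℕ, k ≤ q' (n + 1) / 6 →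
        ∀ m : ℤ, (m : ℝ) ∉ Set.uIcc (y + k * β) (y' + k * β)) ∨
    (∀ k : ℕ, k ≤ q' (n + 1) / 6 →
        ∀ m : ℤ, (m : ℝ) ∉ Set.uIcc (y - k * β) (y' - k * β)) ∨
    (∃ k : ℕ, k ≤ q' n - 1 ∧
        ∃ m : ℤ, (m : ℝ) ∈ Set.uIcc (y + k * β) (y' + k * β)) := by
  rw [or_iff_not_imp_left, or_iff_not_imp_left]
  intro hfwd hbwd
  push Not at hfwd hbwd
  obtain ⟨a, ha, m₁, hm₁⟩ := hfwd
  obtain ⟨b, hb, m₂, hm₂⟩ := hbwd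
  by_cases haq : a ≤ q' n - 1
  · exact ⟨a, haq, m₁, hm₁⟩
  have hclose' : 6 * (q' n * |y - y'|) < 1 := by
    rw [lt_div_iff₀ (mul_pos (by norm_num) (hq.cast_pos n))] at hclose
    linarith
  obtain ⟨k, hk, m, hm⟩ := exists_forward_hit_of_hits hβ hq hclose' (by omega) (by omega)
    (by omega) (mem_uIcc_add_const_iff.1 hm₁) (mem_uIcc_sub_const_iff.1 hm₂)
  exact ⟨k, by omega, m, mem_uIcc_add_const_iff.2 hm⟩
end

section
/- Let φ ∈ C¹(𝕋) with ∫_𝕋 φ' dλ = 0, and α irrational. For every ε > 0 there exists δ > 0 such that for all z, z' ∈ 𝕋 with ‖z − z'‖ < δ and all k ∈ ℕ: |φ^{(k)}(z) − φ^{(k)}(z')| < ε · max{1, k‖z − z'‖}. -/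
/-!
By the mean value theorem, after translating `z'` by an integer,
`|φ^{(k)}(z) - φ^{(k)}(z')| ≤ ‖z - z'‖ · sup |(φ')^{(k)}|`, so it suffices that the Birkhoff sums of
the zero-mean continuous function `φ'` grow uniformly sublinearly: `|(φ')^{(k)}| ≤ εk + C_ε`.
For a trigonometric polynomial this holds with `ε = 0`, since the Birkhoff sums of a character
`e_n` with `n ≠ 0` are geometric sums with ratio `e_n(α) ≠ 1`; the general case follows by the
uniform density of trigonometric polynomials. Then `δ = ε / (2 (C_{ε/2} + 1))` works.
-/

open MeasureTheory

/-- Distance to the nearest integer, i.e. the distance of `x mod 1` to `0` on the circle. -/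
noncomputable def nearestIntDist (x : ℝ) : ℝ := |x - round x|

open Function Finset

lemma norm_birkhoffSum_le {X E : Type*} [SeminormedAddCommGroup E] (F : X → X) {g : X → E}
    {B : ℝ} (hg : ∀ x, ‖g x‖ ≤ B) (k : ℕ) (x : X) : ‖birkhoffSum F g k x‖ ≤ k * B :=
  calc ‖birkhoffSum F g k x‖ ≤ ∑ j ∈ range k, ‖g (F^[j] x)‖ := norm_sum_le _ _
    _ ≤ ∑ _j ∈ range k, B := sum_le_sum fun j _ => hg _
    _ = k * B := by simp

namespace AddCircle

variable {T : ℝ}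

lemma fourier_add_nsmul (n : ℤ) (x α : AddCircle T) (j : ℕ) :
    fourier n (x + j • α) = fourier n x * fourier n α ^ j := by
  rw [fourier_apply, fourier_apply, fourier_apply, smul_add, toCircle_add, smul_comm,
    toCircle_nsmul]
  simp

lemma birkhoffSum_fourier (n : ℤ) (α x : AddCircle T) (k : ℕ) :
    birkhoffSum (· + α) (fourier n) k x = fourier n x * ∑ j ∈ range k, fourier n α ^ j := by
  simp only [birkhoffSum, add_right_iterate_apply, mul_sum, fourier_add_nsmul]

variable [Fact (0 < T)]

lemma fourier_apply_ne_one {α : AddCircle T} (hα : ¬ IsOfFinAddOrder α) {n : ℤ} (hn : n ≠ 0) :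
    fourier n α ≠ 1 := by
  rw [fourier_apply, ← Circle.coe_one, ne_eq, Circle.coe_inj, ← toCircle_zero,
    (injective_toCircle (Fact.out : 0 < T).ne').eq_iff]
  exact fun h => hα (isOfFinAddOrder_iff_zsmul_eq_zero.mpr ⟨n, hn, h⟩)

lemma norm_birkhoffSum_fourier_le {α : AddCircle T} (hα : ¬ IsOfFinAddOrder α) {n : ℤ}
    (hn : n ≠ 0) (k : ℕ) (x : AddCircle T) :
    ‖birkhoffSum (· + α) (fourier n) k x‖ ≤ 2 / ‖fourier n α - 1‖ := by
  have hne := fourier_apply_ne_one hα hn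
  have hnorm : ∀ y : AddCircle T, ‖fourier n y‖ = 1 := fun y => by
    rw [fourier_apply, Circle.norm_coe]
  rw [birkhoffSum_fourier, geom_sum_eq hne, norm_mul, hnorm, one_mul, norm_div]
  gcongr
  calc ‖fourier n α ^ k - 1‖ ≤ ‖fourier n α ^ k‖ + ‖(1 : ℂ)‖ := norm_sub_le _ _
    _ = 2 := by rw [norm_pow, hnorm]; norm_num

lemma integral_fourier_of_ne_zero {n : ℤ} (hn : n ≠ 0) :
    ∫ y : AddCircle T, fourier n y ∂haarAddCircle = 0 := by
  simpa [fourierCoeff, hn] using congr_fun (fourierCoeff_fourier (T := T) n) 0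

lemma integrable_haarAddCircle {E : Type*} [NormedAddCommGroup E] (f : C(AddCircle T, E)) :
    Integrable f haarAddCircle :=
  f.continuous.integrable_of_hasCompactSupport (HasCompactSupport.of_compactSpace _)

lemma exists_bound_birkhoffSum_sub_integral_of_mem_span {α : AddCircle T}
    (hα : ¬ IsOfFinAddOrder α) {P : C(AddCircle T, ℂ)}
    (hP : P ∈ Submodule.span ℂ (Set.range fourier)) :
    ∃ C, ∀ k x, ‖birkhoffSum (· + α) P k x - k • ∫ y, P y ∂haarAddCircle‖ ≤ C := by
  induction hP using Submodule.span_induction with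
  | mem _ h =>
    obtain ⟨n, rfl⟩ := h
    rcases eq_or_ne n 0 with rfl | hn
    · exact ⟨0, fun k x => by simp [birkhoffSum]⟩
    · refine ⟨2 / ‖fourier n α - 1‖, fun k x => ?_⟩
      rw [integral_fourier_of_ne_zero hn, smul_zero, sub_zero]
      exact norm_birkhoffSum_fourier_le hα hn k x
  | zero => exact ⟨0, fun k x => by simp [birkhoffSum]⟩
  | add P Q _ _ hP hQ =>
    obtain ⟨C, hC⟩ := hP
    obtain ⟨D, hD⟩ := hQ
    refine ⟨C + D, fun k x => ?_⟩
    have hint : ∫ y, (P + Q) y ∂haarAddCircle =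
        ∫ y, P y ∂haarAddCircle + ∫ y, Q y ∂haarAddCircle :=
      integral_add (integrable_haarAddCircle P) (integrable_haarAddCircle Q)
    have hsplit : birkhoffSum (· + α) (P + Q) k x - k • ∫ y, (P + Q) y ∂haarAddCircle =
        (birkhoffSum (· + α) P k x - k • ∫ y, P y ∂haarAddCircle)
          + (birkhoffSum (· + α) Q k x - k • ∫ y, Q y ∂haarAddCircle) := by
      rw [hint, ContinuousMap.coe_add, birkhoffSum_add', smul_add]; abel
    rw [hsplit]
    exact (norm_add_le _ _).trans (add_le_add (hC k x) (hD k x))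
  | smul c P _ hP =>
    obtain ⟨C, hC⟩ := hP
    refine ⟨‖c‖ * C, fun k x => ?_⟩
    have hsum : birkhoffSum (· + α) (c • P) k x = c • birkhoffSum (· + α) P k x := by
      simp only [birkhoffSum, ContinuousMap.coe_smul, Pi.smul_apply, smul_sum]
    have hint : ∫ y, (c • P) y ∂haarAddCircle = c • ∫ y, P y ∂haarAddCircle :=
      integral_smul c _
    rw [hsum, hint, smul_comm, ← smul_sub, norm_smul]
    exact mul_le_mul_of_nonneg_left (hC k x) (norm_nonneg c)

theorem exists_norm_birkhoffSum_sub_integral_le {α : AddCircle T} (hα : ¬ IsOfFinAddOrder α)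
    (f : C(AddCircle T, ℂ)) {ε : ℝ} (hε : 0 < ε) :
    ∃ C, ∀ k x, ‖birkhoffSum (· + α) f k x - k • ∫ y, f y ∂haarAddCircle‖ ≤ ε * k + C := by
  have hdense :
      f ∈ closure (Submodule.span ℂ (Set.range (@fourier T)) : Set C(AddCircle T, ℂ)) := by
    rw [← Submodule.topologicalClosure_coe, span_fourier_closure_eq_top]; trivial
  obtain ⟨P, hP, hfP⟩ := Metric.mem_closure_iff.mp hdense (ε / 2) (by positivity)
  obtain ⟨C, hC⟩ := exists_bound_birkhoffSum_sub_integral_of_mem_span hα hP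
  refine ⟨C, fun k x => ?_⟩
  have hg : ∀ y, ‖(f - P) y‖ ≤ ε / 2 := fun y =>
    ((f - P).norm_coe_le_norm y).trans (by rw [← dist_eq_norm]; exact hfP.le)
  have hint : ‖∫ y, (f - P) y ∂haarAddCircle‖ ≤ ε / 2 := by
    simpa using norm_integral_le_of_norm_le_const (μ := haarAddCircle) (ae_of_all _ hg)
  have hsplit : birkhoffSum (· + α) f k x - k • ∫ y, f y ∂haarAddCircle =
      (birkhoffSum (· + α) (f - P) k x - k • ∫ y, (f - P) y ∂haarAddCircle)
        + (birkhoffSum (· + α) P k x - k • ∫ y, P y ∂haarAddCircle) := by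
    rw [ContinuousMap.coe_sub, birkhoffSum_sub, Pi.sub_def,
      integral_sub (integrable_haarAddCircle f) (integrable_haarAddCircle P), smul_sub]
    abel
  calc _ ≤ ‖birkhoffSum (· + α) (f - P) k x‖ + ‖k • ∫ y, (f - P) y ∂haarAddCircle‖
        + ‖birkhoffSum (· + α) P k x - k • ∫ y, P y ∂haarAddCircle‖ := by
        rw [hsplit]; exact (norm_add_le _ _).trans (add_le_add_left (norm_sub_le _ _) _)
    _ ≤ k * (ε / 2) + k * (ε / 2) + C := by
        rw [nsmul_eq_mul, norm_mul, Complex.norm_natCast]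
        gcongr
        exacts [norm_birkhoffSum_le _ hg k x, hC k x]
    _ = ε * k + C := by ring

end AddCircle

lemma Irrational.not_isOfFinAddOrder_coe {α : ℝ} (hα : Irrational α) :
    ¬ IsOfFinAddOrder (α : UnitAddCircle) := by
  rw [AddCircle.not_isOfFinAddOrder_iff_forall_rat_ne_div, div_one]
  exact fun q h => hα ⟨q, h⟩

theorem exists_abs_birkhoff_le_of_integral_eq_zero {α : ℝ} (hα : Irrational α) {ψ : ℝ → ℝ}
    (hψ : Continuous ψ) (hper : Periodic ψ 1) (hmean : ∫ x in (0:ℝ)..1, ψ x = 0) {ε : ℝ}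
    (hε : 0 < ε) : ∃ C, ∀ k x, |birkhoff α ψ k x| ≤ ε * k + C := by
  have hperℂ : Periodic (fun x => (ψ x : ℂ)) 1 := fun x => congrArg _ (hper x)
  let f : C(UnitAddCircle, ℂ) :=
    ⟨hperℂ.lift, continuous_coinduced_dom.mpr (Complex.continuous_ofReal.comp hψ)⟩
  have hf : ∀ x : ℝ, f x = ψ x := hperℂ.lift_coe
  have hsum : ∀ k (x : ℝ), birkhoffSum (· + (α : UnitAddCircle)) f k x = birkhoff α ψ k x := by
    intro k x
    simp only [birkhoffSum, birkhoff, add_right_iterate_apply, ← AddCircle.coe_nsmul,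
      ← AddCircle.coe_add, hf, nsmul_eq_mul, Complex.ofReal_sum]
  have hint : ∫ y, f y ∂AddCircle.haarAddCircle = 0 := by
    rw [← one_smul ENNReal AddCircle.haarAddCircle, ← ENNReal.ofReal_one,
      ← AddCircle.volume_eq_smul_haarAddCircle, ← UnitAddCircle.intervalIntegral_preimage 0,
      zero_add]
    simp only [hf, intervalIntegral.integral_ofReal, hmean, Complex.ofReal_zero]
  obtain ⟨C, hC⟩ :=
    AddCircle.exists_norm_birkhoffSum_sub_integral_le hα.not_isOfFinAddOrder_coe f hε
  refine ⟨C, fun k x => ?_⟩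
  simpa [hsum, hint] using hC k x

lemma Function.Periodic.birkhoff {φ : ℝ → ℝ} {c : ℝ} (h : Periodic φ c) (α : ℝ) (k : ℕ) :
    Periodic (birkhoff α φ k) c :=
  fun x => sum_congr rfl fun i _ => by rw [add_right_comm, h]

lemma Function.Periodic.deriv {φ : ℝ → ℝ} {c : ℝ} (h : Periodic φ c) : Periodic (deriv φ) c :=
  fun x => by rw [← deriv_comp_add_const, funext h]

lemma hasDerivAt_birkhoff {φ φ' : ℝ → ℝ} (hφ : ∀ x, HasDerivAt φ (φ' x) x) (α : ℝ) (k : ℕ)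
    (x : ℝ) : HasDerivAt (birkhoff α φ k) (birkhoff α φ' k x) x :=
  HasDerivAt.fun_sum fun _ _ => (hφ _).comp_add_const x _

lemma abs_birkhoff_sub_le {φ φ' : ℝ → ℝ} (hφ : ∀ x, HasDerivAt φ (φ' x) x) (hper : Periodic φ 1)
    {α B : ℝ} {k : ℕ} (hB : ∀ x, |birkhoff α φ' k x| ≤ B) (z z' : ℝ) :
    |birkhoff α φ k z - birkhoff α φ k z'| ≤ B * nearestIntDist (z - z') := by
  have hshift : birkhoff α φ k (z' + round (z - z')) = birkhoff α φ k z' := by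
    simpa using (hper.birkhoff α k).int_mul (round (z - z')) z'
  have hdist : nearestIntDist (z - z') = |z - (z' + round (z - z'))| := by
    rw [nearestIntDist, sub_add_eq_sub_sub]
  rw [← hshift, hdist]
  exact Convex.norm_image_sub_le_of_norm_hasDerivWithin_le
    (fun x _ => (hasDerivAt_birkhoff hφ α k x).hasDerivWithinAt) (fun x _ => hB x) convex_univ
    (Set.mem_univ _) (Set.mem_univ _)

/-- Uniform Lipschitz-type estimate for Birkhoff sums of a `C¹` function on the circle whose
derivative has zero mean: for every `ε > 0` there is `δ > 0` such that whenever
`‖z − z'‖ < δ` and `k ∈ ℕ`, `|φ^{(k)}(z) − φ^{(k)}(z')| < ε · max{1, k‖z − z'‖}`. -/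
theorem birkhoff_C1_estimate (α : ℝ) (hα : Irrational α) (φ : ℝ → ℝ)
    (hφ : ContDiff ℝ 1 φ) (hper : Function.Periodic φ 1)
    (hmean : ∫ x in (0:ℝ)..1, deriv φ x = 0) :
    ∀ ε > 0, ∃ δ > 0, ∀ z z' : ℝ, nearestIntDist (z - z') < δ → ∀ k : ℕ,
      |birkhoff α φ k z - birkhoff α φ k z'| <
        ε * max 1 ((k : ℝ) * nearestIntDist (z - z')) := by
  intro ε hε
  obtain ⟨C, hC⟩ := exists_abs_birkhoff_le_of_integral_eq_zero hα (hφ.continuous_deriv le_rfl)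
    hper.deriv hmean (half_pos hε)
  have hC0 : 0 ≤ C := by simpa [birkhoff] using hC 0 0
  have hderiv : ∀ x, HasDerivAt φ (deriv φ x) x :=
    fun x => (hφ.differentiable one_ne_zero x).hasDerivAt
  refine ⟨ε / (2 * (C + 1)), by positivity, fun z z' hd k => ?_⟩
  set d := nearestIntDist (z - z')
  have hd0 : 0 ≤ d := abs_nonneg _
  have hCd : C * d < ε / 2 := by
    rw [lt_div_iff₀ (by positivity)] at hd
    nlinarith
  have hkd : ε / 2 * (k * d) ≤ ε / 2 * max 1 (k * d) := by gcongr; exact le_max_right _ _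
  have hone : ε / 2 ≤ ε / 2 * max 1 (k * d) :=
    le_mul_of_one_le_right (by positivity) (le_max_left _ _)
  calc |birkhoff α φ k z - birkhoff α φ k z'| ≤ (ε / 2 * k + C) * d :=
        abs_birkhoff_sub_le hderiv hper (hC k) z z'
    _ < ε * max 1 (k * d) := by linarith
end
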